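/- Let j ≥ 1 be an integer, τ ∈ [0,1), and let φ : [0,∞) → ℝ be a C² function satisfying the ordinary differential equation φ''(r) + φ'(r)/r − φ(r)/(1 + r²/8)² = j² φ(r)/r² for all r > 0, together with the growth bound |φ(r)| ≤ C(1 + r)^τ for some constant C > 0. Then φ ≡ 0. -/

import Mathlib

open scoped Real Topology RealInnerProductSpace
open Filter Asymptotics MeasureTheory

noncomputable section

abbrev E2 := EuclideanSpace ℝ (Fin 2)

/-- The `i`-th standard basis vector of `ℝ²`. -/
def ee (i : Fin 2) : E2 := EuclideanSpace.single i 1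

/-- The Laplacian of `f : ℝ² → ℝ` at `x`. -/
def lap (f : E2 → ℝ) (x : E2) : ℝ :=
  ∑ i : Fin 2, fderiv ℝ (fun y => fderiv ℝ f y (ee i)) x (ee i)

/-- The standard bubble `U(x) = -2 log(1 + |x|²/8)`. -/
def Ub (x : E2) : ℝ := -2 * Real.log (1 + ‖x‖ ^ 2 / 8)

/-- `√e`. -/
def sqrtE : ℝ := Real.sqrt (Real.exp 1)

def φ₀ (x : E2) : ℝ := (8 - ‖x‖ ^ 2) / (8 + ‖x‖ ^ 2)

def φ₁ (x : E2) : ℝ := x 0 / (8 + ‖x‖ ^ 2)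

def φ₂ (x : E2) : ℝ := x 1 / (8 + ‖x‖ ^ 2)

/-- The constant `e^{(√7/2)π} + e^{-(√7/2)π}`. -/
def C7 : ℝ := Real.exp (Real.sqrt 7 / 2 * Real.pi) + Real.exp (-(Real.sqrt 7 / 2 * Real.pi))

/-- A function on `ℝ²` is radial. -/
def Radial (f : E2 → ℝ) : Prop := ∀ x y : E2, ‖x‖ = ‖y‖ → f x = f y

/-- Characterization of the function `φ₃`: the positive radial solution of
`-Δφ + e^U φ = 0` on `ℝ²` with `φ(0) = 1` and logarithmic growth at infinity. -/
structure IsPhi3 (φ : E2 → ℝ) : Prop where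
  smooth : ContDiff ℝ 2 φ
  pos : ∀ x, 0 < φ x
  radial : Radial φ
  eqn : ∀ x, -lap φ x + Real.exp (Ub x) * φ x = 0
  at0 : φ 0 = 1
  asymp : ∃ C M : ℝ, ∀ x : E2, M ≤ ‖x‖ →
    |φ x - C7 / (2 * Real.pi) * Real.log (1 + ‖x‖ ^ 2 / 8)| ≤ C
  grad_asymp : ∀ ε > (0:ℝ), ∃ M : ℝ, 1 ≤ M ∧ ∀ x : E2, M ≤ ‖x‖ →
    ‖gradient φ x - (C7 / Real.pi / ‖x‖ ^ 2) • x‖ ≤ ε / ‖x‖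

/-- Characterization of the function `ψ₀`: the smooth radial solution of
`-Δψ - e^U ψ + (1/2) U² e^U = 0` on `ℝ²` with `ψ(0) = 0`, `∇ψ(0) = 0` and
`ψ(x) = 12 log |x| + O(1)` at infinity. -/
structure IsPsi0 (ψ : E2 → ℝ) : Prop where
  smooth : ContDiff ℝ 2 ψ
  radial : Radial ψ
  eqn : ∀ x, -lap ψ x - Real.exp (Ub x) * ψ x + 1 / 2 * Ub x ^ 2 * Real.exp (Ub x) = 0
  at0 : ψ 0 = 0
  grad0 : gradient ψ 0 = 0
  asymp : ∃ C M : ℝ, 1 ≤ M ∧ ∀ x : E2, M ≤ ‖x‖ → |ψ x - 12 * Real.log ‖x‖| ≤ C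
  grad_asymp : ∃ C M : ℝ, 1 ≤ M ∧ ∀ x : E2, M ≤ ‖x‖ →
    ‖gradient ψ x - (12 / ‖x‖ ^ 2) • x‖ ≤ C / ‖x‖ ^ 2

/-- The Green function of `-Δ` on `Ω` with Dirichlet boundary conditions, together with
its regular part `H` and the defining properties of `H`. -/
structure GreenData (Ω : Set E2) where
  G : E2 → E2 → ℝ
  H : E2 → E2 → ℝ
  H_smooth : ∀ y ∈ Ω, ContDiffOn ℝ 2 (fun x => H x y) Ω
  H_harm : ∀ y ∈ Ω, ∀ x ∈ Ω, lap (fun z => H z y) x = 0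
  H_bd : ∀ y ∈ Ω, ∀ x ∈ frontier Ω, H x y = -(1 / (2 * Real.pi)) * Real.log ‖x - y‖
  G_def : ∀ x y : E2, G x y = -(1 / (2 * Real.pi)) * Real.log ‖x - y‖ - H x y

/-- The Robin function `R(x) = H(x,x)`. -/
def GreenData.R {Ω : Set E2} (gd : GreenData Ω) (x : E2) : ℝ := gd.H x x

/-- The Kirchhoff–Routh type function `Φ_{k,i}(𝐱) = R(x_i) - ∑_{j ≠ i} G(x_i, x_j)`. -/
def GreenData.Phi {Ω : Set E2} (gd : GreenData Ω) {k : ℕ} (x : Fin k → E2) (i : Fin k) : ℝ :=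
  gd.R (x i) - ∑ j ∈ Finset.univ.erase i, gd.G (x i) (x j)

/-- `x` is a nondegenerate critical point of `R`: the gradient vanishes and the
Hessian bilinear form is nondegenerate (invertible). -/
def NondegCritPt (R : E2 → ℝ) (x : E2) : Prop :=
  fderiv ℝ R x = 0 ∧
  ∀ v : E2, (∀ w : E2, fderiv ℝ (fun z => fderiv ℝ R z w) x v = 0) → v = 0

/-- `(u,v)` is a classical solution of the Lane–Emden system on `Ω` with exponents `p, q`:
`-Δu = v^p`, `-Δv = u^q` in `Ω`, `u, v > 0` in `Ω`, and `u = v = 0` on `∂Ω`. -/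
structure IsLESol (Ω : Set E2) (p q : ℝ) (u v : E2 → ℝ) : Prop where
  u_c2 : ContDiffOn ℝ 2 u Ω
  v_c2 : ContDiffOn ℝ 2 v Ω
  u_cont : ContinuousOn u (closure Ω)
  v_cont : ContinuousOn v (closure Ω)
  u_pos : ∀ x ∈ Ω, 0 < u x
  v_pos : ∀ x ∈ Ω, 0 < v x
  u_bd : ∀ x ∈ frontier Ω, u x = 0
  v_bd : ∀ x ∈ frontier Ω, v x = 0
  equ : ∀ x ∈ Ω, -lap u x = v x ^ p
  eqv : ∀ x ∈ Ω, -lap v x = u x ^ q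

/-- Convergence in `C²_loc` on a set: locally uniform convergence of the functions and
of their first and second derivatives. -/
def TendstoC2LocOn (f : ℕ → E2 → ℝ) (g : E2 → ℝ) (s : Set E2) : Prop :=
  TendstoLocallyUniformlyOn f g atTop s ∧
  TendstoLocallyUniformlyOn (fun n x => fderiv ℝ (f n) x) (fun x => fderiv ℝ g x) atTop s ∧
  TendstoLocallyUniformlyOn (fun n x => iteratedFDeriv ℝ 2 (f n) x)
    (fun x => iteratedFDeriv ℝ 2 g x) atTop s

/-- A `k`-bubble solution sequence of the Lane–Emden system on `Ω`. -/
structure BubbleSeq (Ω : Set E2) (gd : GreenData Ω) (k : ℕ) where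
  hk : 0 < k
  p : ℕ → ℝ
  q : ℕ → ℝ
  θseq : ℕ → ℝ
  θ : ℝ
  u : ℕ → E2 → ℝ
  v : ℕ → E2 → ℝ
  xI : Fin k → E2
  xn : ℕ → Fin k → E2
  r : ℝ
  μ : ℕ → Fin k → ℝ
  w : ℕ → Fin k → E2 → ℝ
  z : ℕ → Fin k → E2 → ℝ
  hr : 0 < r
  p_pos : ∀ n, 0 < p n
  p_top : Tendsto p atTop atTop
  q_def : ∀ n, q n = p n + θseq n
  θseq_nonneg : ∀ n, 0 ≤ θseq n
  θseq_lim : Tendsto θseq atTop (𝓝 θ)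
  sol : ∀ n, IsLESol Ω (p n) (q n) (u n) (v n)
  xI_mem : ∀ i, xI i ∈ Ω
  xI_inj : Function.Injective xI
  ball_sub : ∀ i, Metric.closedBall (xI i) (2 * r) ⊆ Ω
  ball_disj : ∀ i j, i ≠ j →
    Disjoint (Metric.closedBall (xI i) (2 * r)) (Metric.closedBall (xI j) (2 * r))
  xn_mem : ∀ n i, xn n i ∈ Metric.closedBall (xI i) (2 * r)
  xn_max : ∀ n i, ∀ x ∈ Metric.closedBall (xI i) (2 * r), v n x ≤ v n (xn n i)
  xn_lim : ∀ i, Tendsto (fun n => xn n i) atTop (𝓝 (xI i))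
  u_max_lim : ∀ i, Tendsto (fun n => u n (xn n i)) atTop (𝓝 sqrtE)
  v_max_lim : ∀ i, Tendsto (fun n => v n (xn n i)) atTop (𝓝 sqrtE)
  pu_lim : TendstoC2LocOn (fun n x => p n * u n x)
    (fun x => 8 * Real.pi * sqrtE * ∑ i, gd.G x (xI i)) (closure Ω \ Set.range xI)
  pv_lim : TendstoC2LocOn (fun n x => p n * v n x)
    (fun x => 8 * Real.pi * sqrtE * ∑ i, gd.G x (xI i)) (closure Ω \ Set.range xI)
  μ_def : ∀ n i, μ n i = (p n * v n (xn n i) ^ (p n - 1)) ^ (-(1:ℝ) / 2)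
  μ_pos : ∀ n i, 0 < μ n i
  μ_lim : ∀ i, Tendsto (fun n => μ n i) atTop (𝓝 0)
  w_def : ∀ n i x, w n i x = p n / v n (xn n i) * (u n (xn n i + μ n i • x) - v n (xn n i))
  z_def : ∀ n i x, z n i x = p n / v n (xn n i) * (v n (xn n i + μ n i • x) - v n (xn n i))
  w_lim : ∀ i, TendstoC2LocOn (fun n => w n i) (fun x => Ub x - θ / 2) Set.univ
  z_lim : ∀ i, TendstoC2LocOn (fun n => z n i) Ub Set.univ
  decay : ∀ i, ∀ γ ∈ Set.Ioo (0:ℝ) 4, ∃ C > (0:ℝ), ∀ᶠ n in atTop, ∀ x : E2,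
    ‖x‖ ≤ r / μ n i →
      0 ≤ (1 + w n i x / p n) ^ q n ∧ (1 + w n i x / p n) ^ q n ≤ C / (1 + ‖x‖ ^ γ) ∧
      0 ≤ (1 + z n i x / p n) ^ p n ∧ (1 + z n i x / p n) ^ p n ≤ C / (1 + ‖x‖ ^ γ)

namespace BubbleSeq

variable {Ω : Set E2} {gd : GreenData Ω} {k : ℕ}

/-- `σ_{n,i} = θ_n log v_n(x_{n,i})`. -/
def σfun (S : BubbleSeq Ω gd k) (n : ℕ) (i : Fin k) : ℝ :=
  S.θseq n * Real.log (S.v n (S.xn n i))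

/-- `s_{n,i} = p_n (w_{n,i} + σ_{n,i} - U)`. -/
def sfun (S : BubbleSeq Ω gd k) (n : ℕ) (i : Fin k) (x : E2) : ℝ :=
  S.p n * (S.w n i x + S.σfun n i - Ub x)

/-- `t_{n,i} = p_n (z_{n,i} - U)`. -/
def tfun (S : BubbleSeq Ω gd k) (n : ℕ) (i : Fin k) (x : E2) : ℝ :=
  S.p n * (S.z n i x - Ub x)

/-- `m_{n,i} = -2π θ_n / (e^{(√7/2)π} + e^{-(√7/2)π})`. -/
def mcoef (S : BubbleSeq Ω gd k) (n : ℕ) : ℝ := -2 * Real.pi * S.θseq n / C7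

/-- `l_{n,i} = m_{n,i} + θ_n + σ_{n,i}`. -/
def lcoef (S : BubbleSeq Ω gd k) (n : ℕ) (i : Fin k) : ℝ :=
  S.mcoef n + S.θseq n + S.σfun n i

/-- `s*_{n,i} = ψ₀ + l_{n,i} φ₀ + m_{n,i} φ₃ - (θ_n + σ_{n,i}) U + σ_{n,i} θ_n + σ_{n,i}²/2`. -/
def sstar (S : BubbleSeq Ω gd k) (φ₃ ψ₀ : E2 → ℝ) (n : ℕ) (i : Fin k) (x : E2) : ℝ :=
  ψ₀ x + S.lcoef n i * φ₀ x + S.mcoef n * φ₃ x - (S.θseq n + S.σfun n i) * Ub x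
    + S.σfun n i * S.θseq n + S.σfun n i ^ 2 / 2

/-- `t*_{n,i} = ψ₀ + l_{n,i} φ₀ - m_{n,i} φ₃ - (θ_n + σ_{n,i})`. -/
def tstar (S : BubbleSeq Ω gd k) (φ₃ ψ₀ : E2 → ℝ) (n : ℕ) (i : Fin k) (x : E2) : ℝ :=
  ψ₀ x + S.lcoef n i * φ₀ x - S.mcoef n * φ₃ x - (S.θseq n + S.σfun n i)

end BubbleSeq


section RadialModeAux

open Filter Set

set_option maxHeartbeats 1000000

lemma aux_nonpos (j : ℕ) (hj : 1 ≤ j) (τ : ℝ) (hτ0 : 0 ≤ τ) (hτ1 : τ < 1)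
    (φ : ℝ → ℝ) (hφ : ContDiffOn ℝ 2 φ (Set.Ici 0))
    (heq : ∀ r : ℝ, 0 < r →
      deriv (deriv φ) r + deriv φ r / r - φ r / (1 + r ^ 2 / 8) ^ 2 =
        (j:ℝ) ^ 2 * φ r / r ^ 2)
    (C : ℝ) (hC : 0 < C) (hgrowth : ∀ r : ℝ, 0 ≤ r → |φ r| ≤ C * (1 + r) ^ τ)
    (h0 : φ 0 = 0) : ∀ r : ℝ, 0 ≤ r → φ r ≤ 0 := by
  by_contra hcon
  push_neg at hcon
  obtain ⟨r₀, hr₀0, hr₀⟩ := hcon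
  have hr₀pos : 0 < r₀ := by
    rcases hr₀0.lt_or_eq with h | h
    · exact h
    · exfalso; rw [← h, h0] at hr₀; exact lt_irrefl 0 hr₀
  obtain ⟨ε, hεpos, hεr₀⟩ : ∃ ε : ℝ, 0 < ε ∧ ε * r₀ ^ j = φ r₀ / 2 :=
    ⟨φ r₀ / (2 * r₀ ^ j), div_pos hr₀ (by positivity), by
      have hne : (r₀:ℝ) ^ j ≠ 0 := by positivity
      field_simp⟩
  -- choose R
  have htend : Tendsto (fun r : ℝ => r ^ (1 - τ)) atTop atTop :=
    tendsto_rpow_atTop (by linarith)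
  obtain ⟨R, hRpow, hR1, hRr₀⟩ :=
    ((htend.eventually_ge_atTop (2 * C / ε)).and
      ((eventually_ge_atTop (1:ℝ)).and (eventually_gt_atTop r₀))).exists
  have hRpos : (0:ℝ) < R := by linarith
  -- growth bound at R
  have hgR : φ R ≤ ε * R ^ j := by
    have h1 : φ R ≤ C * (1 + R) ^ τ := (le_abs_self _).trans (hgrowth R (by linarith))
    have h2 : (1 + R : ℝ) ^ τ ≤ (2 * R) ^ τ :=
      Real.rpow_le_rpow (by linarith) (by linarith) hτ0
    have h3 : ((2 * R : ℝ)) ^ τ = 2 ^ τ * R ^ τ := Real.mul_rpow (by norm_num) hRpos.le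
    have h4 : (2:ℝ) ^ τ ≤ 2 := by
      calc (2:ℝ)^τ ≤ 2^(1:ℝ) := Real.rpow_le_rpow_of_exponent_le one_le_two hτ1.le
      _ = 2 := Real.rpow_one 2
    have hRτpos : (0:ℝ) < R ^ τ := Real.rpow_pos_of_pos hRpos τ
    have h5 : C * (1 + R) ^ τ ≤ 2 * C * R ^ τ := by
      have e1 : C * (1 + R) ^ τ ≤ C * ((2*R) ^ τ) := mul_le_mul_of_nonneg_left h2 hC.le
      have e2 : C * (2^τ * R^τ) ≤ C * (2 * R^τ) :=
        mul_le_mul_of_nonneg_left (mul_le_mul_of_nonneg_right h4 hRτpos.le) hC.le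
      rw [h3] at e1
      nlinarith [e1, e2]
    have h6 : 2 * C * R ^ τ ≤ ε * R := by
      have e1 : ε * (2 * C / ε) = 2 * C := by field_simp
      have e2 : R ^ (1 - τ) * R ^ τ = R := by
        rw [← Real.rpow_add hRpos, sub_add_cancel, Real.rpow_one]
      calc 2 * C * R ^ τ = ε * (2 * C / ε) * R ^ τ := by rw [e1]
        _ ≤ ε * R ^ (1 - τ) * R ^ τ := by
            exact mul_le_mul_of_nonneg_right (mul_le_mul_of_nonneg_left hRpow hεpos.le) hRτpos.le
        _ = ε * R := by rw [mul_assoc, e2]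
    have h7 : ε * R ≤ ε * R ^ j := by
      have := le_self_pow₀ hR1 (by omega : j ≠ 0)
      nlinarith
    linarith
  -- the comparison function
  set g : ℝ → ℝ := fun r => φ r - ε * r ^ j with hg_def
  have hgcont : ContinuousOn g (Icc 0 R) := by
    apply ContinuousOn.sub
    · exact (hφ.continuousOn).mono (Icc_subset_Ici_self)
    · exact (continuous_const.mul (continuous_pow j)).continuousOn
  obtain ⟨a, haI, hamax⟩ := isCompact_Icc.exists_isMaxOn (nonempty_Icc.2 hRpos.le) hgcont
  have hga : φ r₀ / 2 ≤ g a := by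
    have hle : g r₀ ≤ g a := hamax ⟨hr₀0, hRr₀.le⟩
    have hgr₀ : g r₀ = φ r₀ / 2 := by
      simp only [hg_def]
      linarith
    linarith [hgr₀ ▸ hle]
  have hgapos : 0 < g a := lt_of_lt_of_le (by linarith) hga
  have ha0 : a ≠ 0 := by
    intro h
    rw [h] at hgapos
    simp [hg_def, h0, zero_pow (by omega : j ≠ 0)] at hgapos
  have haR : a ≠ R := by
    intro h
    rw [h] at hgapos
    simp only [hg_def] at hgapos
    linarith
  have haIoo : a ∈ Ioo 0 R := ⟨lt_of_le_of_ne haI.1 (Ne.symm ha0), lt_of_le_of_ne haI.2 haR⟩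
  have hapos : 0 < a := haIoo.1
  -- local max
  have hlocmax : IsLocalMax g a := hamax.isLocalMax (Icc_mem_nhds hapos haIoo.2)
  -- differentiability machinery
  set f1 : ℝ → ℝ := derivWithin φ (Set.Ici 0) with hf1_def
  have hf1cd : ContDiffOn ℝ 1 f1 (Set.Ici 0) := hφ.derivWithin (uniqueDiffOn_Ici 0) (by norm_num)
  have hderiv_eq : ∀ r : ℝ, 0 < r → deriv φ r = f1 r := fun r hr =>
    (derivWithin_of_mem_nhds (Ici_mem_nhds hr)).symm
  have hφdiff : ∀ r : ℝ, 0 < r → DifferentiableAt ℝ φ r := fun r hr =>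
    ((hφ.differentiableOn (by norm_num)) r (le_of_lt hr)).differentiableAt (Ici_mem_nhds hr)
  have hf1diff : ∀ r : ℝ, 0 < r → DifferentiableAt ℝ f1 r := fun r hr =>
    ((hf1cd.differentiableOn (by norm_num)) r (le_of_lt hr)).differentiableAt (Ici_mem_nhds hr)
  -- deriv φ is differentiable at points of Ioi 0
  have hderiv_ev : ∀ r : ℝ, 0 < r → deriv φ =ᶠ[nhds r] f1 := by
    intro r hr
    filter_upwards [Ioi_mem_nhds hr] with x hx
    exact hderiv_eq x hx
  have hdφdiff : ∀ r : ℝ, 0 < r → DifferentiableAt ℝ (deriv φ) r := fun r hr =>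
    (hf1diff r hr).congr_of_eventuallyEq (hderiv_ev r hr)
  -- formula for deriv g on Ioi 0
  have hdg : ∀ r : ℝ, 0 < r → deriv g r = deriv φ r - ε * (j * r ^ (j - 1)) := by
    intro r hr
    have h1 : DifferentiableAt ℝ (fun x : ℝ => ε * x ^ j) r := by fun_prop
    rw [hg_def]
    rw [deriv_fun_sub (hφdiff r hr) h1, deriv_const_mul _ (by fun_prop), deriv_pow_field]
  have hdg_ev : deriv g =ᶠ[nhds a] fun r => deriv φ r - ε * (j * r ^ (j - 1)) := by
    filter_upwards [Ioi_mem_nhds hapos] with x hx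
    exact hdg x hx
  -- deriv g a = 0
  have hdga : deriv g a = 0 := hlocmax.deriv_eq_zero
  have hdφa : deriv φ a = ε * (j * a ^ (j - 1)) := by
    have := hdg a hapos
    rw [hdga] at this
    linarith
  -- second derivative of g at a
  have hrhsdiff : DifferentiableAt ℝ (fun r : ℝ => deriv φ r - ε * (j * r ^ (j - 1))) a :=
    (hdφdiff a hapos).sub (by fun_prop)
  have hdgdiff : DifferentiableAt ℝ (deriv g) a :=
    hrhsdiff.congr_of_eventuallyEq hdg_ev
  have hddg : deriv (deriv g) a
      = deriv (deriv φ) a - ε * ((j:ℝ) * ((j - 1 : ℕ) * a ^ (j - 1 - 1))) := by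
    rw [hdg_ev.deriv_eq]
    rw [deriv_fun_sub (hdφdiff a hapos) (by fun_prop), deriv_const_mul _ (by fun_prop),
      deriv_const_mul _ (by fun_prop), deriv_pow_field]
  -- key positivity
  obtain ⟨m, rfl⟩ : ∃ m, j = m + 1 := ⟨j - 1, by omega⟩
  have hφa_pos : 0 < φ a := by
    have : g a = φ a - ε * a ^ (m+1) := rfl
    nlinarith [pow_pos hapos (m+1)]
  have hK : 0 < deriv (deriv g) a := by
    have hODE := heq a hapos
    have ha : (a:ℝ) ≠ 0 := ne_of_gt hapos
    have ha2 : (a:ℝ) ^ 2 ≠ 0 := pow_ne_zero 2 ha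
    have hsq : (0:ℝ) < (1 + a ^ 2 / 8) ^ 2 := by positivity
    simp only [Nat.add_sub_cancel] at hddg hdφa
    push_cast at hddg hdφa
    have hdd2 : deriv (deriv φ) a * a ^ 2
        = ((m:ℝ)+1) ^ 2 * φ a + a ^ 2 * (φ a / (1 + a ^ 2 / 8) ^ 2) - deriv φ a * a := by
      have h1 : deriv (deriv φ) a
          = ((m:ℝ)+1) ^ 2 * φ a / a ^ 2 + φ a / (1 + a ^ 2 / 8) ^ 2 - deriv φ a / a := by
        push_cast at hODE
        linarith
      rw [h1]
      field_simp
    have hpow1 : a ^ m * a = a ^ (m + 1) := (pow_succ a m).symm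
    have hpow2 : a ^ (m - 1) * a ^ 2 * (m:ℝ) = a ^ (m + 1) * (m:ℝ) := by
      cases m with
      | zero => simp
      | succ k =>
        have : a ^ (k + 1 - 1) * a ^ 2 = a ^ (k + 1 + 1) := by
          rw [Nat.add_sub_cancel, ← pow_add]
        rw [this]
    have key : deriv (deriv g) a * a ^ 2
        = ((m:ℝ)+1) ^ 2 * g a + a ^ 2 * (φ a / (1 + a ^ 2 / 8) ^ 2) := by
      have hga_eq : g a = φ a - ε * a ^ (m + 1) := rfl
      rw [hddg, hga_eq]
      push_cast
      linear_combination hdd2 - a * hdφa - ε * ((m:ℝ)+1) * hpow1 - ε * ((m:ℝ)+1) * hpow2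
    have hrhs : 0 < ((m:ℝ)+1) ^ 2 * g a + a ^ 2 * (φ a / (1 + a ^ 2 / 8) ^ 2) := by
      have hq : 0 < φ a / (1 + a ^ 2 / 8) ^ 2 := div_pos hφa_pos hsq
      positivity
    have ha2pos : 0 < a ^ 2 := by positivity
    rw [← key] at hrhs
    rcases mul_pos_iff.mp hrhs with h | h
    · exact h.1
    · linarith [h.2, ha2pos]
  -- slope argument : deriv g > 0 just to the right of a
  have hHD : HasDerivAt (deriv g) (deriv (deriv g) a) a := hdgdiff.hasDerivAt
  have hslope : Tendsto (slope (deriv g) a) (nhdsWithin a {a}ᶜ) (nhds (deriv (deriv g) a)) :=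
    hasDerivAt_iff_tendsto_slope.1 hHD
  have hev : ∀ᶠ r in nhdsWithin a (Ioi a), 0 < deriv g r := by
    have h1 : ∀ᶠ r in nhdsWithin a {a}ᶜ, 0 < slope (deriv g) a r :=
      hslope.eventually (lt_mem_nhds hK)
    have h2 : ∀ᶠ r in nhdsWithin a (Ioi a), 0 < slope (deriv g) a r :=
      h1.filter_mono (nhdsWithin_mono a (fun x hx => ne_of_gt hx))
    filter_upwards [h2, self_mem_nhdsWithin] with r hr hmem
    have hra : 0 < r - a := sub_pos.2 hmem
    have : slope (deriv g) a r = (deriv g r - 0) / (r - a) := by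
      rw [slope_def_field, hdga]
    rw [this] at hr
    have := mul_pos hr hra
    rw [div_mul_cancel₀] at this
    · linarith
    · exact ne_of_gt hra
  obtain ⟨u, hu, huP⟩ := mem_nhdsGT_iff_exists_Ioo_subset.1 hev
  set b : ℝ := min u R
  have hab : a < b := lt_min hu haIoo.2
  set c : ℝ := (a + b) / 2
  have hac : a < c := by simp only [c]; linarith
  have hcb : c < b := by simp only [c]; linarith
  have hcR : c ≤ R := le_trans hcb.le (min_le_right u R)
  have hmono : StrictMonoOn g (Icc a c) := by
    apply strictMonoOn_of_deriv_pos (convex_Icc a c)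
    · exact hgcont.mono (fun x hx => ⟨le_trans hapos.le hx.1, le_trans hx.2 hcR⟩)
    · intro x hx
      rw [interior_Icc] at hx
      apply huP
      exact ⟨hx.1, lt_of_lt_of_le hx.2 (le_trans hcb.le (min_le_left u R))⟩
  have hlt : g a < g c := hmono (left_mem_Icc.2 (le_of_lt hac))
    (right_mem_Icc.2 (le_of_lt hac)) hac
  have : g c ≤ g a := hamax ⟨le_trans hapos.le hac.le, hcR⟩
  linarith

lemma phi_at_zero (j : ℕ) (hj : 1 ≤ j) (φ : ℝ → ℝ) (hφ : ContDiffOn ℝ 2 φ (Set.Ici 0))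
    (heq : ∀ r : ℝ, 0 < r →
      deriv (deriv φ) r + deriv φ r / r - φ r / (1 + r ^ 2 / 8) ^ 2 =
        (j:ℝ) ^ 2 * φ r / r ^ 2) : φ 0 = 0 := by
  set f1 : ℝ → ℝ := derivWithin φ (Set.Ici 0) with hf1_def
  set f2 : ℝ → ℝ := derivWithin f1 (Set.Ici 0) with hf2_def
  have hf1cd : ContDiffOn ℝ 1 f1 (Set.Ici 0) := hφ.derivWithin (uniqueDiffOn_Ici 0) (by norm_num)
  have hf1cont : ContinuousOn f1 (Set.Ici 0) :=
    hφ.continuousOn_derivWithin (uniqueDiffOn_Ici 0) one_le_two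
  have hf2cont : ContinuousOn f2 (Set.Ici 0) :=
    hf1cd.continuousOn_derivWithin (uniqueDiffOn_Ici 0) le_rfl
  have hd1 : ∀ r : ℝ, 0 < r → deriv φ r = f1 r := fun r hr =>
    (derivWithin_of_mem_nhds (Ici_mem_nhds hr)).symm
  have hd2 : ∀ r : ℝ, 0 < r → deriv (deriv φ) r = f2 r := by
    intro r hr
    have hev : deriv φ =ᶠ[nhds r] f1 := by
      filter_upwards [Ioi_mem_nhds hr] with x hx
      exact hd1 x hx
    rw [hev.deriv_eq, hf2_def]
    exact (derivWithin_of_mem_nhds (Ici_mem_nhds hr)).symm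
  set F : ℝ → ℝ := fun r => r ^ 2 * f2 r + r * f1 r - r ^ 2 * (φ r / (1 + r ^ 2 / 8) ^ 2)
    with hF_def
  have hQ : ∀ r : ℝ, ((1:ℝ) + r ^ 2 / 8) ^ 2 ≠ 0 := fun r => by positivity
  have hFeq : ∀ r : ℝ, 0 < r → F r = (j:ℝ) ^ 2 * φ r := by
    intro r hr
    have h := heq r hr
    rw [hd2 r hr, hd1 r hr] at h
    have hrne : (r:ℝ) ≠ 0 := ne_of_gt hr
    have hr2 : (r:ℝ) ^ 2 ≠ 0 := pow_ne_zero 2 hrne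
    have e1 : F r = r ^ 2 * (f2 r + f1 r / r - φ r / (1 + r ^ 2 / 8) ^ 2) := by
      simp only [hF_def]
      field_simp
    rw [e1, h, mul_comm, div_mul_cancel₀ _ hr2]
  have hFcont : ContinuousOn F (Set.Ici 0) := by
    apply ContinuousOn.sub
    · exact ((continuous_pow 2).continuousOn.mul hf2cont).add
        (continuous_id.continuousOn.mul hf1cont)
    · exact (continuous_pow 2).continuousOn.mul
        ((hφ.continuousOn).div (by fun_prop) (fun r _ => hQ r))
  have hφcont : ContinuousOn φ (Set.Ici 0) := hφ.continuousOn
  have hlim1 : Filter.Tendsto F (nhdsWithin 0 (Set.Ioi 0)) (nhds (F 0)) :=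
    (hFcont 0 Set.self_mem_Ici).mono_left (nhdsWithin_mono 0 Set.Ioi_subset_Ici_self)
  have hlim2 : Filter.Tendsto (fun r => (j:ℝ) ^ 2 * φ r) (nhdsWithin 0 (Set.Ioi 0))
      (nhds ((j:ℝ) ^ 2 * φ 0)) := by
    have : ContinuousWithinAt (fun r => (j:ℝ) ^ 2 * φ r) (Set.Ici 0) 0 :=
      (continuousWithinAt_const).mul (hφcont 0 Set.self_mem_Ici)
    exact this.mono_left (nhdsWithin_mono 0 Set.Ioi_subset_Ici_self)
  have hcongr : F =ᶠ[nhdsWithin 0 (Set.Ioi 0)] fun r => (j:ℝ) ^ 2 * φ r := by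
    filter_upwards [self_mem_nhdsWithin] with r hr
    exact hFeq r hr
  have hF0 : F 0 = 0 := by simp [hF_def]
  have huniq : F 0 = (j:ℝ) ^ 2 * φ 0 :=
    tendsto_nhds_unique (hlim1.congr' hcongr) hlim2
  rw [hF0] at huniq
  have hjne : ((j:ℝ)) ^ 2 ≠ 0 := by
    have : (1:ℝ) ≤ (j:ℝ) := by exact_mod_cast hj
    positivity
  field_simp at huniq
  exact (mul_eq_zero.mp huniq.symm).resolve_left hjne

theorem radial_mode_vanishes' (j : ℕ) (hj : 1 ≤ j) (τ : ℝ) (hτ0 : 0 ≤ τ) (hτ1 : τ < 1)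
    (φ : ℝ → ℝ) (hφ : ContDiffOn ℝ 2 φ (Set.Ici 0))
    (heq : ∀ r : ℝ, 0 < r →
      deriv (deriv φ) r + deriv φ r / r - φ r / (1 + r ^ 2 / 8) ^ 2 =
        (j:ℝ) ^ 2 * φ r / r ^ 2)
    (C : ℝ) (hC : 0 < C) (hgrowth : ∀ r : ℝ, 0 ≤ r → |φ r| ≤ C * (1 + r) ^ τ) :
    ∀ r : ℝ, 0 ≤ r → φ r = 0 := by
  have h0 : φ 0 = 0 := phi_at_zero j hj φ hφ heq
  intro r hr
  have h1 : φ r ≤ 0 := aux_nonpos j hj τ hτ0 hτ1 φ hφ heq C hC hgrowth h0 r hr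
  have heqn : ∀ s : ℝ, 0 < s →
      deriv (deriv (fun x => -φ x)) s + deriv (fun x => -φ x) s / s -
        (fun x => -φ x) s / (1 + s ^ 2 / 8) ^ 2 = (j:ℝ) ^ 2 * (fun x => -φ x) s / s ^ 2 := by
    intro s hs
    have e1 : deriv (fun x => -φ x) = fun x => -deriv φ x := deriv.neg'
    have e2 : deriv (deriv (fun x => -φ x)) s = -deriv (deriv φ) s := by
      rw [e1]; exact deriv.neg
    rw [e2, e1]
    have h := heq s hs
    simp only
    have e3 : -deriv φ s / s = -(deriv φ s / s) := by ring
    have e4 : -φ s / (1 + s ^ 2 / 8) ^ 2 = -(φ s / (1 + s ^ 2 / 8) ^ 2) := by ring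
    have e5 : (j:ℝ) ^ 2 * -φ s / s ^ 2 = -((j:ℝ) ^ 2 * φ s / s ^ 2) := by ring
    rw [e3, e4, e5]
    linarith
  have h2 : -φ r ≤ 0 := by
    have := aux_nonpos j hj τ hτ0 hτ1 (fun x => -φ x) hφ.neg heqn C hC
      (fun s hs => by simpa using hgrowth s hs) (by simp [h0]) r hr
    simpa using this
  linarith

end RadialModeAux

/-- the radial ODE satisfied by higher angular Fourier modes has no
nontrivial solution with sub-linear growth. -/
theorem radial_mode_vanishes (j : ℕ) (hj : 1 ≤ j) (τ : ℝ) (hτ0 : 0 ≤ τ) (hτ1 : τ < 1)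
    (φ : ℝ → ℝ) (hφ : ContDiffOn ℝ 2 φ (Set.Ici 0))
    (heq : ∀ r : ℝ, 0 < r →
      deriv (deriv φ) r + deriv φ r / r - φ r / (1 + r ^ 2 / 8) ^ 2 =
        (j:ℝ) ^ 2 * φ r / r ^ 2)
    (C : ℝ) (hC : 0 < C) (hgrowth : ∀ r : ℝ, 0 ≤ r → |φ r| ≤ C * (1 + r) ^ τ) :
    ∀ r : ℝ, 0 ≤ r → φ r = 0 :=
  radial_mode_vanishes' j hj τ hτ0 hτ1 φ hφ heq C hC hgrowth

end
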